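/- Let d be a natural number that is not a perfect square, m a nonzero integer with |m| < √d, T the minimal period of the continued fraction of √d, p_n/q_n the convergents of √d, and (v_n) the associated sequence. Let S be the set of pairs (x, y) of positive coprime natural numbers with x² − d·y² = m, and E_m = { j : 1 ≤ j ≤ T and (−1)^j·v_j = m }. Assume T is even. Then S is nonempty if and only if E_m is nonempty, and in that case S equals the union over N ∈ E_m of the sets { (p_{N+kT−1}, q_{N+kT−1}) : k ∈ ℕ }. -/

import Mathlib

/-!
The complete quotients of `ξ = √d` are `xₙ = (uₙ + ξ) / vₙ`, and multiplying norms of consecutive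
convergents (Brahmagupta's identity) gives `p_{n-1}² - d q_{n-1}² = (-1)ⁿ vₙ`; so every index
with `(-1)ʲ vⱼ = m` yields the coprime solution `(p_{j-1}, q_{j-1})`. Conversely, if
`x² - d y² = m` with `|m| < √d`, then `|√d - x/y| < 1/(2y²)` when `x > y√d`, and
`|1/√d - y/x| < 1/(2x²)` otherwise, so by Legendre's theorem `(x, y)` is a convergent of `√d`
(directly, or read off from a convergent of `1/√d`). Finally `xₙ`, hence `vₙ`, is `T`-periodic
for `n ≥ 1`, and since `T` is even so is `(-1)ⁿ vₙ`; indices reduce modulo `T`.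
-/

/-- The complete quotients of a real number `x`:
`cq x 0 = x` and `cq x (n+1) = 1 / (cq x n - ⌊cq x n⌋)`. -/
noncomputable def cq (x : ℝ) : ℕ → ℝ
  | 0 => x
  | n + 1 => (Int.fract (cq x n))⁻¹

/-- The partial quotients of a real number `x`: `pq x n = ⌊cq x n⌋`. -/
noncomputable def pq (x : ℝ) (n : ℕ) : ℤ := ⌊cq x n⌋

open Function

lemma cq_cq (x : ℝ) (s k : ℕ) : cq (cq x s) k = cq x (s + k) := by
  induction k with
  | zero => rfl
  | succ k ih => rw [cq, ih]; rfl

lemma pq_cq (x : ℝ) (s k : ℕ) : pq (cq x s) k = pq x (s + k) := by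
  rw [pq, pq, cq_cq]

lemma pq_succ (x : ℝ) (k : ℕ) : pq x (k + 1) = pq (Int.fract x)⁻¹ k := by
  rw [Nat.add_comm, ← pq_cq x 1]; rfl

lemma irrational_cq {x : ℝ} (hx : Irrational x) (n : ℕ) : Irrational (cq x n) := by
  induction n with
  | zero => exact hx
  | succ n ih => exact (ih.sub_intCast _).inv

lemma one_le_pq_succ {x : ℝ} (hx : Irrational x) (n : ℕ) : 1 ≤ pq x (n + 1) := by
  have hfract : 0 < Int.fract (cq x n) := Int.fract_pos.2 ((irrational_cq hx n).ne_int _)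
  refine Int.le_floor.2 (Int.cast_one (R := ℝ) ▸ ?_)
  exact (one_le_inv₀ hfract).2 (Int.fract_lt_one _).le

lemma one_le_pq {ξ : ℝ} (hξ : Irrational ξ) (hξ1 : 1 < ξ) (k : ℕ) : 1 ≤ pq ξ k := by
  cases k with
  | zero => exact Int.le_floor.2 (by exact_mod_cast hξ1.le)
  | succ k => exact one_le_pq_succ hξ k

/-- Continuants, indexed like `P` and `Q` in the theorem:
`contNum b (n + 2) = p_n` and `contDen b (n + 2) = q_n`. -/
def contNum (b : ℕ → ℤ) : ℕ → ℤ
  | 0 => 0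
  | 1 => 1
  | n + 2 => b n * contNum b (n + 1) + contNum b n

def contDen (b : ℕ → ℤ) : ℕ → ℤ
  | 0 => 1
  | 1 => 0
  | n + 2 => b n * contDen b (n + 1) + contDen b n

section Continuants

variable (b : ℕ → ℤ)

@[simp] lemma contNum_zero : contNum b 0 = 0 := rfl
@[simp] lemma contNum_one : contNum b 1 = 1 := rfl
lemma contNum_add_two (n : ℕ) : contNum b (n + 2) = b n * contNum b (n + 1) + contNum b n := rfl
@[simp] lemma contDen_zero : contDen b 0 = 1 := rfl
@[simp] lemma contDen_one : contDen b 1 = 0 := rfl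
lemma contDen_add_two (n : ℕ) : contDen b (n + 2) = b n * contDen b (n + 1) + contDen b n := rfl

lemma eq_contNum_of_rec {P : ℕ → ℤ} (h0 : P 0 = 0) (h1 : P 1 = 1)
    (h : ∀ n, P (n + 2) = b n * P (n + 1) + P n) : P = contNum b := by
  funext n
  induction n using Nat.twoStepInduction with
  | zero => exact h0
  | one => exact h1
  | more n ih₀ ih₁ => rw [h, ih₀, ih₁, contNum_add_two]

lemma eq_contDen_of_rec {Q : ℕ → ℤ} (h0 : Q 0 = 1) (h1 : Q 1 = 0)
    (h : ∀ n, Q (n + 2) = b n * Q (n + 1) + Q n) : Q = contDen b := by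
  funext n
  induction n using Nat.twoStepInduction with
  | zero => exact h0
  | one => exact h1
  | more n ih₀ ih₁ => rw [h, ih₀, ih₁, contDen_add_two]

lemma contNum_mul_contDen_sub (n : ℕ) :
    contNum b (n + 1) * contDen b n - contNum b n * contDen b (n + 1) = (-1) ^ n := by
  induction n with
  | zero => simp
  | succ n ih =>
    rw [contNum_add_two, contDen_add_two, pow_succ, ← ih]
    ring

lemma isCoprime_contNum_contDen (n : ℕ) : IsCoprime (contNum b n) (contDen b n) := by
  have hsq : ((-1 : ℤ) ^ n) ^ 2 = 1 := by rw [pow_right_comm, neg_one_sq, one_pow]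
  exact ⟨-(-1) ^ n * contDen b (n + 1), (-1) ^ n * contNum b (n + 1),
    by linear_combination (-1) ^ n * contNum_mul_contDen_sub b n + hsq⟩

lemma contNum_contDen_succ (n : ℕ) :
    contNum b (n + 1) = b 0 * contNum (fun k => b (k + 1)) n + contDen (fun k => b (k + 1)) n ∧
      contDen b (n + 1) = contNum (fun k => b (k + 1)) n := by
  induction n using Nat.twoStepInduction with
  | zero => simp
  | one => simp [contNum_add_two, contDen_add_two]
  | more n ih₀ ih₁ =>
    constructor
    · rw [contNum_add_two b (n + 1), ih₁.1, ih₀.1, contNum_add_two _ n, contDen_add_two _ n]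
      ring
    · rw [contDen_add_two b (n + 1), ih₁.2, ih₀.2, contNum_add_two _ n]

lemma one_le_contNum (hb : ∀ k, 1 ≤ b k) (n : ℕ) : 1 ≤ contNum b (n + 1) := by
  induction n using Nat.twoStepInduction with
  | zero => simp
  | one => simpa [contNum_add_two] using hb 0
  | more n ih₀ ih₁ =>
    rw [contNum_add_two]
    nlinarith [hb (n + 1)]

lemma one_le_contDen (hb : ∀ k, 1 ≤ b (k + 1)) (n : ℕ) : 1 ≤ contDen b (n + 2) := by
  rw [(contNum_contDen_succ b (n + 1)).2]
  exact one_le_contNum _ hb n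

end Continuants

lemma Real.convergent_eq_contNum_div {ξ : ℝ} (hξ : Irrational ξ) (n : ℕ) :
    ξ.convergent n = (contNum (pq ξ) (n + 2) : ℚ) / contDen (pq ξ) (n + 2) := by
  induction n generalizing ξ with
  | zero => simp [contNum_add_two, contDen_add_two, pq, cq]
  | succ n ih =>
    have htail : (fun k => pq ξ (k + 1)) = pq (Int.fract ξ)⁻¹ := funext (pq_succ ξ)
    obtain ⟨hnum, hden⟩ := contNum_contDen_succ (pq ξ) (n + 2)
    rw [htail] at hnum hden
    have hpos : (0 : ℚ) < contNum (pq (Int.fract ξ)⁻¹) (n + 2) := by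
      have := one_le_contNum _ (fun k => pq_succ ξ k ▸ one_le_pq_succ hξ k) (n + 1)
      exact_mod_cast this.trans_lt' one_pos
    have hξ' : Irrational (Int.fract ξ)⁻¹ := (hξ.sub_intCast _).inv
    rw [Real.convergent_succ, ih hξ', hnum, hden]
    generalize contNum (pq (Int.fract ξ)⁻¹) (n + 2) = N at hpos ⊢
    simp only [pq, cq]
    push_cast
    field_simp

lemma Irrational.eq_of_pq_eq {ξ η : ℝ} (hξ : Irrational ξ) (hη : Irrational η)
    (h : pq ξ = pq η) : ξ = η := by
  have hconv : (GenContFract.of ξ).convs = (GenContFract.of η).convs := funext fun n => by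
    rw [Real.convs_eq_convergent, Real.convs_eq_convergent, Real.convergent_eq_contNum_div hξ,
      Real.convergent_eq_contNum_div hη, h]
  exact tendsto_nhds_unique (hconv ▸ GenContFract.of_convergence ξ) (GenContFract.of_convergence η)

lemma Irrational.periodic_cq {x : ℝ} (hx : Irrational x) {T : ℕ}
    (h : Periodic (fun n => pq x (n + 1)) T) : Periodic (fun n => cq x (n + 1)) T :=
  fun n => (irrational_cq hx _).eq_of_pq_eq (irrational_cq hx _) <| funext fun k => by
    rw [pq_cq, pq_cq]
    convert h (n + k) using 2 <;> omega

lemma contNum_contDen_pq_inv {ξ : ℝ} (hξ : 1 < ξ) (n : ℕ) :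
    contNum (pq ξ⁻¹) (n + 1) = contDen (pq ξ) n ∧ contDen (pq ξ⁻¹) (n + 1) = contNum (pq ξ) n := by
  have hinv : 0 ≤ ξ⁻¹ ∧ ξ⁻¹ < 1 := ⟨by positivity, inv_lt_one_of_one_lt₀ hξ⟩
  have hhead : pq ξ⁻¹ 0 = 0 := Int.floor_eq_zero_iff.2 hinv
  have htail : (fun k => pq ξ⁻¹ (k + 1)) = pq ξ :=
    funext fun k => by rw [pq_succ, Int.fract_eq_self.2 hinv, inv_inv]
  simpa only [hhead, htail, zero_mul, zero_add] using contNum_contDen_succ (pq ξ⁻¹) n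

/-- Legendre's theorem, with the convergents written as quotients of continuants. -/
lemma exists_eq_contNum_of_abs_sub_lt {ξ : ℝ} (hξ : Irrational ξ) {x y : ℤ} (hy : 0 < y)
    (hxy : IsCoprime x y) (h : |ξ - x / y| < 1 / (2 * (y : ℝ) ^ 2)) :
    ∃ n, x = contNum (pq ξ) (n + 2) ∧ y = contDen (pq ξ) (n + 2) := by
  have hxy' : Nat.Coprime x.natAbs y.natAbs := Int.isCoprime_iff_gcd_eq_one.1 hxy
  have hden : (((x / y : ℚ)).den : ℤ) = y := Rat.den_div_eq_of_coprime hy hxy'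
  obtain ⟨n, hn⟩ := Real.exists_rat_eq_convergent (ξ := ξ) (q := x / y) <| by
    rw [show ((x / y : ℚ).den : ℝ) = y by exact_mod_cast hden]
    push_cast
    exact h
  rw [Real.convergent_eq_contNum_div hξ] at hn
  have hden_pos := one_le_contDen _ (one_le_pq_succ hξ) n
  exact ⟨n, Rat.div_int_inj hy hden_pos hxy'
    (Int.isCoprime_iff_gcd_eq_one.1 (isCoprime_contNum_contDen _ _)) hn⟩

lemma abs_sub_div_lt_of_sq_sub_sq_lt {ξ x y : ℝ} (hξ : 0 < ξ) (hy : 0 < y) (hxy : y * ξ < x)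
    (h : x ^ 2 - ξ ^ 2 * y ^ 2 < ξ) : |ξ - x / y| < 1 / (2 * y ^ 2) := by
  have hgap : (x - y * ξ) * (2 * y) < 1 := by
    have : (x - y * ξ) * (2 * y) * ξ < ξ := by nlinarith
    nlinarith
  rw [abs_sub_comm, abs_of_pos (by rw [sub_pos, lt_div_iff₀ hy]; linarith),
    div_sub' hy.ne', div_lt_div_iff₀ hy (by positivity)]
  nlinarith

/-- Legendre's theorem applies to `x / y` and `ξ` when `x > y ξ`, and to `y / x` and `ξ⁻¹`
otherwise. -/
lemma exists_eq_contNum_of_abs_sq_sub_sq_lt {ξ : ℝ} (hξ : Irrational ξ) (hξ1 : 1 < ξ)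
    {x y : ℤ} (hx : 0 < x) (hy : 0 < y) (hxy : IsCoprime x y)
    (h : |(x : ℝ) ^ 2 - ξ ^ 2 * y ^ 2| < ξ) :
    ∃ j, 1 ≤ j ∧ x = contNum (pq ξ) (j + 1) ∧ y = contDen (pq ξ) (j + 1) := by
  have hξ0 : 0 < ξ := one_pos.trans hξ1
  have hyξ : (y : ℝ) * ξ ≠ x := (hξ.intCast_mul hy.ne').ne_int x
  obtain ⟨hlow, hhigh⟩ := abs_lt.1 h
  rcases hyξ.lt_or_gt with hlt | hgt
  · have happrox := abs_sub_div_lt_of_sq_sub_sq_lt hξ0 (by exact_mod_cast hy) hlt hhigh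
    obtain ⟨n, hxn, hyn⟩ := exists_eq_contNum_of_abs_sub_lt hξ hy hxy (by exact_mod_cast happrox)
    exact ⟨n + 1, by omega, hxn, hyn⟩
  · have hlt' : (x : ℝ) * ξ⁻¹ < y := by rw [← div_eq_mul_inv, div_lt_iff₀ hξ0]; exact hgt
    have hhigh' : (y : ℝ) ^ 2 - ξ⁻¹ ^ 2 * x ^ 2 < ξ⁻¹ := by
      have hscale : (y : ℝ) ^ 2 - ξ⁻¹ ^ 2 * x ^ 2 = (ξ ^ 2 * y ^ 2 - x ^ 2) * ξ⁻¹ * ξ⁻¹ := by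
        field_simp
      rw [hscale]
      calc (ξ ^ 2 * y ^ 2 - x ^ 2) * ξ⁻¹ * ξ⁻¹ < ξ * ξ⁻¹ * ξ⁻¹ := by gcongr; linarith
        _ = ξ⁻¹ := by field_simp
    have happrox :=
      abs_sub_div_lt_of_sq_sub_sq_lt (inv_pos.2 hξ0) (by exact_mod_cast hx) hlt' hhigh'
    obtain ⟨n, hyn, hxn⟩ :=
      exists_eq_contNum_of_abs_sub_lt hξ.inv hx hxy.symm (by exact_mod_cast happrox)
    obtain ⟨hnum, hden⟩ := contNum_contDen_pq_inv hξ1 (n + 1)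
    rw [hnum] at hyn
    rw [hden] at hxn
    refine ⟨n, Nat.one_le_iff_ne_zero.2 fun hn => ?_, hxn, hyn⟩
    subst hn
    rw [zero_add, contDen_one] at hyn
    omega

section QuadraticIrrational

variable {d : ℤ} {u v : ℕ → ℤ}

lemma Irrational.den_eq_of_add_div_eq {ξ : ℝ} (hξ : Irrational ξ) {s w s' w' : ℤ} (hw : w ≠ 0)
    (hw' : w' ≠ 0) (h : (s + ξ) / w = (s' + ξ) / w') : w = w' := by
  rw [div_eq_div_iff (Int.cast_ne_zero.2 hw) (Int.cast_ne_zero.2 hw')] at h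
  by_contra hne
  refine (hξ.mul_intCast (sub_ne_zero.2 (Ne.symm hne))).ne_int (s' * w - s * w') ?_
  push_cast
  linear_combination h

lemma inv_fract_add_div_eq {ξ : ℝ} {s w t w' : ℤ} (hξd : ξ ^ 2 = d) (hw : w ≠ 0) (hw' : w' ≠ 0)
    (ht : t = ⌊(s + ξ) / w⌋ * w - s) (hww' : w * w' = d - t ^ 2) :
    (Int.fract ((s + ξ) / w))⁻¹ = (t + ξ) / w' := by
  have hwR : (w : ℝ) ≠ 0 := Int.cast_ne_zero.2 hw
  have hww'R : (w : ℝ) * w' = (ξ - t) * (t + ξ) := by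
    have := congrArg (Int.cast : ℤ → ℝ) hww'
    push_cast at this
    linear_combination this - hξd
  have hξt : ξ - t ≠ 0 := fun h0 => by
    simp [h0, hwR, Int.cast_ne_zero.2 hw'] at hww'R
  have hfract : Int.fract ((s + ξ) / w) = (ξ - t) / w := by
    rw [Int.fract, ht]
    push_cast
    field_simp
    ring
  rw [hfract, inv_div, div_eq_div_iff hξt (Int.cast_ne_zero.2 hw')]
  linear_combination hww'R

/-- The second identity feeds Brahmagupta's identity
`N(p_{n-1}, q_{n-1}) N(p_n, q_n) = (p_n p_{n-1} - d q_n q_{n-1})² - d (p_n q_{n-1} - p_{n-1} q_n)²`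
in the induction step for the first. -/
lemma contNum_sq_sub_mul_contDen_sq {a : ℕ → ℤ} (hu1 : u 1 = a 0)
    (hu : ∀ n, 1 ≤ n → u (n + 1) = a n * v n - u n) (hv0 : v 0 = 1)
    (hv : ∀ n, v n * v (n + 1) = d - u (n + 1) ^ 2) (hv_ne : ∀ n, v n ≠ 0) (n : ℕ) :
    contNum a (n + 1) ^ 2 - d * contDen a (n + 1) ^ 2 = (-1) ^ n * v n ∧
      contNum a (n + 2) * contNum a (n + 1) - d * (contDen a (n + 2) * contDen a (n + 1)) =
        (-1) ^ n * u (n + 1) := by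
  have hsq (k : ℕ) : ((-1 : ℤ) ^ k) ^ 2 = 1 := by rw [pow_right_comm, neg_one_sq, one_pow]
  induction n with
  | zero => simp [contNum_add_two, contDen_add_two, hv0, hu1]
  | succ n ih =>
    set p := contNum a
    set q := contDen a
    have hnorm : p (n + 2) ^ 2 - d * q (n + 2) ^ 2 = (-1) ^ (n + 1) * v (n + 1) := by
      refine mul_left_cancel₀ (mul_ne_zero (pow_ne_zero n (neg_ne_zero.2 one_ne_zero)) (hv_ne n)) ?_
      calc (-1) ^ n * v n * (p (n + 2) ^ 2 - d * q (n + 2) ^ 2)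
          = (p (n + 1) ^ 2 - d * q (n + 1) ^ 2) * (p (n + 2) ^ 2 - d * q (n + 2) ^ 2) := by
            rw [ih.1]
        _ = (p (n + 2) * p (n + 1) - d * (q (n + 2) * q (n + 1))) ^ 2
              - d * (p (n + 2) * q (n + 1) - p (n + 1) * q (n + 2)) ^ 2 := by ring
        _ = u (n + 1) ^ 2 - d := by
            rw [ih.2, contNum_mul_contDen_sub, mul_pow, hsq, hsq]
            ring
        _ = (-1) ^ n * v n * ((-1) ^ (n + 1) * v (n + 1)) := by
            rw [pow_succ]
            linear_combination hv n + v n * v (n + 1) * hsq n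
    refine ⟨hnorm, ?_⟩
    have hp : p (n + 3) = a (n + 1) * p (n + 2) + p (n + 1) := contNum_add_two a (n + 1)
    have hq : q (n + 3) = a (n + 1) * q (n + 2) + q (n + 1) := contDen_add_two a (n + 1)
    rw [hp, hq, hu (n + 1) (by omega), pow_succ]
    linear_combination a (n + 1) * hnorm + ih.2

lemma cq_succ_eq_add_div {ξ : ℝ} (hξd : ξ ^ 2 = d) (hu1 : u 1 = pq ξ 0)
    (hu : ∀ n, 1 ≤ n → u (n + 1) = pq ξ n * v n - u n) (hv0 : v 0 = 1)
    (hv : ∀ n, v n * v (n + 1) = d - u (n + 1) ^ 2) (hv_ne : ∀ n, v n ≠ 0) (n : ℕ) :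
    cq ξ (n + 1) = (u (n + 1) + ξ) / v (n + 1) := by
  induction n with
  | zero =>
    have h := inv_fract_add_div_eq (s := 0) (w := 1) (t := u 1) hξd one_ne_zero (hv_ne 1)
      (by simp [hu1, pq, cq]) (by simpa [hv0] using hv 0)
    simpa [cq] using h
  | succ n ih =>
    rw [cq, ih]
    refine inv_fract_add_div_eq hξd (hv_ne _) (hv_ne _) ?_ (hv _)
    rw [← ih, hu _ (by omega)]
    rfl

lemma periodic_v_succ_of_periodic_pq {ξ : ℝ} (hξ : Irrational ξ) (hξd : ξ ^ 2 = d)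
    (hu1 : u 1 = pq ξ 0) (hu : ∀ n, 1 ≤ n → u (n + 1) = pq ξ n * v n - u n) (hv0 : v 0 = 1)
    (hv : ∀ n, v n * v (n + 1) = d - u (n + 1) ^ 2) (hv_ne : ∀ n, v n ≠ 0) {T : ℕ}
    (hper : Periodic (fun n => pq ξ (n + 1)) T) : Periodic (fun n => v (n + 1)) T := fun n => by
  have h := hξ.periodic_cq hper n
  simp only [cq_succ_eq_add_div hξd hu1 hu hv0 hv hv_ne] at h
  exact hξ.den_eq_of_add_div_eq (hv_ne _) (hv_ne _) h

end QuadraticIrrational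

lemma pos_coprime_sq_sub_mul_sq_eq_iff {ξ : ℝ} {d m : ℤ} (hξ : Irrational ξ) (hξ1 : 1 < ξ)
    (hξd : ξ ^ 2 = d) (hm : |(m : ℝ)| < ξ) (x y : ℕ) :
    (0 < x ∧ 0 < y ∧ x.Coprime y ∧ (x : ℤ) ^ 2 - d * y ^ 2 = m) ↔
      ∃ j, 1 ≤ j ∧ contNum (pq ξ) (j + 1) ^ 2 - d * contDen (pq ξ) (j + 1) ^ 2 = m ∧
        (x : ℤ) = contNum (pq ξ) (j + 1) ∧ (y : ℤ) = contDen (pq ξ) (j + 1) := by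
  constructor
  · rintro ⟨hx, hy, hxy, hsol⟩
    have hsolR : |((x : ℤ) : ℝ) ^ 2 - ξ ^ 2 * ((y : ℤ) : ℝ) ^ 2| < ξ := by
      rw [hξd]
      exact_mod_cast hsol ▸ hm
    obtain ⟨j, hj, hxj, hyj⟩ := exists_eq_contNum_of_abs_sq_sub_sq_lt hξ hξ1 (by exact_mod_cast hx)
      (by exact_mod_cast hy) (Nat.isCoprime_iff_coprime.2 hxy) hsolR
    exact ⟨j, hj, hxj ▸ hyj ▸ hsol, hxj, hyj⟩
  · rintro ⟨j, hj, hsol, hxj, hyj⟩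
    obtain ⟨i, rfl⟩ := Nat.exists_eq_add_of_le' hj
    have hx := one_le_contNum _ (one_le_pq hξ hξ1) (i + 1)
    have hy : 1 ≤ contDen (pq ξ) (i + 1 + 1) := one_le_contDen _ (fun k => one_le_pq hξ hξ1 _) i
    refine ⟨by omega, by omega, Nat.isCoprime_iff_coprime.1 ?_, by rw [hxj, hyj, hsol]⟩
    exact hxj ▸ hyj ▸ isCoprime_contNum_contDen _ _

lemma one_lt_sqrt_of_not_isSquare {d : ℕ} (hd : ¬ IsSquare d) : 1 < Real.sqrt d := by
  have : 1 < d := by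
    by_contra! h
    interval_cases d
    exacts [hd ⟨0, rfl⟩, hd ⟨1, rfl⟩]
  rw [Real.lt_sqrt zero_le_one, one_pow]
  exact_mod_cast this

lemma neg_one_pow_mul_add_mul_eq {v : ℕ → ℤ} {T : ℕ} (hv : Periodic (fun n => v (n + 1)) T)
    (hT : Even T) (k : ℕ) {N : ℕ} (hN : 1 ≤ N) :
    (-1) ^ (N + k * T) * v (N + k * T) = (-1) ^ N * v N := by
  obtain ⟨n, rfl⟩ := Nat.exists_eq_add_of_le' hN
  have hv_add : v (n + k * T + 1) = v (n + 1) := by simpa using hv.nat_mul k n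
  rw [pow_add (-1 : ℤ) (n + 1), pow_mul', hT.neg_one_pow, one_pow, mul_one,
    Nat.add_right_comm, hv_add]

lemma exists_eq_add_mul_of_one_le {T j : ℕ} (hT : 1 ≤ T) (hj : 1 ≤ j) :
    ∃ N k, 1 ≤ N ∧ N ≤ T ∧ j = N + k * T :=
  ⟨(j - 1) % T + 1, (j - 1) / T, by omega, Nat.mod_lt _ hT, by
    have := Nat.mod_add_div' (j - 1) T; omega⟩

theorem stmt12_general (d : ℕ) (hd : ¬ IsSquare d)
    (m : ℤ) (hmd : |(m : ℝ)| < Real.sqrt d)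
    (a a' : ℕ → ℤ) (ha : ∀ n, a n = pq (Real.sqrt d) n)
    (ha'0 : a' 0 = 2 * a 0) (ha' : ∀ n, 1 ≤ n → a' n = a n)
    (u v : ℕ → ℤ) (hu0 : u 0 = a 0) (hv0 : v 0 = 1)
    (hvpos : ∀ n, 0 < v n)
    (hu : ∀ n, u (n + 1) = a' n * v n - u n)
    (hv : ∀ n, v n * v (n + 1) = (d : ℤ) - (u (n + 1)) ^ 2)
    (P Q : ℕ → ℤ)
    (hP0 : P 0 = 0) (hP1 : P 1 = 1) (hQ0 : Q 0 = 1) (hQ1 : Q 1 = 0)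
    (hP : ∀ n, P (n + 2) = a n * P (n + 1) + P n)
    (hQ : ∀ n, Q (n + 2) = a n * Q (n + 1) + Q n)
    (T : ℕ) (hT : 1 ≤ T)
    (hper : ∀ n, 1 ≤ n → pq (Real.sqrt d) (n + T) = pq (Real.sqrt d) n)
    (hTeven : Even T) :
    ((∃ x y : ℕ, 0 < x ∧ 0 < y ∧ Nat.Coprime x y ∧
        (x : ℤ) ^ 2 - (d : ℤ) * (y : ℤ) ^ 2 = m) ↔
      (∃ j, 1 ≤ j ∧ j ≤ T ∧ (-1 : ℤ) ^ j * v j = m)) ∧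
    ((∃ j, 1 ≤ j ∧ j ≤ T ∧ (-1 : ℤ) ^ j * v j = m) →
      ∀ x y : ℕ,
        (0 < x ∧ 0 < y ∧ Nat.Coprime x y ∧
          (x : ℤ) ^ 2 - (d : ℤ) * (y : ℤ) ^ 2 = m) ↔
        (∃ N k : ℕ, 1 ≤ N ∧ N ≤ T ∧ (-1 : ℤ) ^ N * v N = m ∧
          (x : ℤ) = P (N + k * T + 1) ∧ (y : ℤ) = Q (N + k * T + 1))) := by
  set ξ := Real.sqrt d
  have hξ : Irrational ξ := irrational_sqrt_natCast_iff.2 hd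
  have hξd : ξ ^ 2 = ((d : ℤ) : ℝ) := by
    rw [Int.cast_natCast]
    exact Real.sq_sqrt d.cast_nonneg
  have hξ1 : 1 < ξ := one_lt_sqrt_of_not_isSquare hd
  obtain rfl : a = pq ξ := funext ha
  obtain rfl := eq_contNum_of_rec _ hP0 hP1 hP
  obtain rfl := eq_contDen_of_rec _ hQ0 hQ1 hQ
  have hu1 : u 1 = pq ξ 0 := by rw [hu 0, ha'0, hv0, hu0]; ring
  have hu' : ∀ n, 1 ≤ n → u (n + 1) = pq ξ n * v n - u n := fun n hn => ha' n hn ▸ hu n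
  have hv_ne : ∀ n, v n ≠ 0 := fun n => (hvpos n).ne'
  have hsol (x y : ℕ) := pos_coprime_sq_sub_mul_sq_eq_iff hξ hξ1 hξd hmd x y
  simp only [fun j => (contNum_sq_sub_mul_contDen_sq hu1 hu' hv0 hv hv_ne j).1] at hsol
  have hvper := periodic_v_succ_of_periodic_pq hξ hξd hu1 hu' hv0 hv hv_ne
    (fun n => by simpa only [Nat.add_right_comm] using hper (n + 1) (by omega))
  have hshift (N k : ℕ) (hN : 1 ≤ N) := neg_one_pow_mul_add_mul_eq hvper hTeven k hN
  refine ⟨⟨fun ⟨x, y, hxy⟩ => ?_, fun ⟨N, hN1, _, hNm⟩ => ?_⟩,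
    fun _ x y => ⟨fun hxy => ?_, fun ⟨N, k, hN1, _, hNm, hx, hy⟩ => ?_⟩⟩
  · obtain ⟨j, hj, hjm, -⟩ := (hsol x y).1 hxy
    obtain ⟨N, k, hN1, hNT, rfl⟩ := exists_eq_add_mul_of_one_le hT hj
    exact ⟨N, hN1, hNT, hshift N k hN1 ▸ hjm⟩
  · obtain ⟨n, rfl⟩ := Nat.exists_eq_add_of_le' hN1
    have hp := one_le_contNum _ (one_le_pq hξ hξ1) (n + 1)
    have hq := one_le_contDen _ (fun k => one_le_pq hξ hξ1 _) n
    obtain ⟨x, hx⟩ := Int.eq_ofNat_of_zero_le (zero_le_one.trans hp)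
    obtain ⟨y, hy⟩ := Int.eq_ofNat_of_zero_le (zero_le_one.trans hq)
    exact ⟨x, y, (hsol x y).2 ⟨n + 1, hN1, hNm, hx.symm, hy.symm⟩⟩
  · obtain ⟨j, hj, hjm, hx, hy⟩ := (hsol x y).1 hxy
    obtain ⟨N, k, hN1, hNT, rfl⟩ := exists_eq_add_mul_of_one_le hT hj
    exact ⟨N, k, hN1, hNT, hshift N k hN1 ▸ hjm, hx, hy⟩
  · exact (hsol x y).2 ⟨N + k * T, by omega, (hshift N k hN1).trans hNm, hx, hy⟩

/-- Theorem 14, case `T` even: description of the coprime positive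
solutions of `x² - d·y² = m` (`|m| < √d`).  `P (n+2) = p_n`, `Q (n+2) = q_n`, so
`p_{N+kT-1} = P (N+kT+1)`. -/
theorem stmt12 (d : ℕ) (hd : ¬ IsSquare d)
    (m : ℤ) (hm : m ≠ 0) (hmd : |(m : ℝ)| < Real.sqrt d)
    (a a' : ℕ → ℤ) (ha : ∀ n, a n = pq (Real.sqrt d) n)
    (ha'0 : a' 0 = 2 * a 0) (ha' : ∀ n, 1 ≤ n → a' n = a n)
    (u v : ℕ → ℤ) (hu0 : u 0 = a 0) (hv0 : v 0 = 1)
    (hupos : ∀ n, 0 < u n) (hvpos : ∀ n, 0 < v n)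
    (hu : ∀ n, u (n + 1) = a' n * v n - u n)
    (hv : ∀ n, v n * v (n + 1) = (d : ℤ) - (u (n + 1)) ^ 2)
    (P Q : ℕ → ℤ)
    (hP0 : P 0 = 0) (hP1 : P 1 = 1) (hQ0 : Q 0 = 1) (hQ1 : Q 1 = 0)
    (hP : ∀ n, P (n + 2) = a n * P (n + 1) + P n)
    (hQ : ∀ n, Q (n + 2) = a n * Q (n + 1) + Q n)
    (T : ℕ) (hT : 1 ≤ T)
    (hper : ∀ n, 1 ≤ n → pq (Real.sqrt d) (n + T) = pq (Real.sqrt d) n)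
    (hmin : ∀ T', 1 ≤ T' →
      (∀ n, 1 ≤ n → pq (Real.sqrt d) (n + T') = pq (Real.sqrt d) n) → T ≤ T')
    (hTeven : Even T) :
    ((∃ x y : ℕ, 0 < x ∧ 0 < y ∧ Nat.Coprime x y ∧
        (x : ℤ) ^ 2 - (d : ℤ) * (y : ℤ) ^ 2 = m) ↔
      (∃ j, 1 ≤ j ∧ j ≤ T ∧ (-1 : ℤ) ^ j * v j = m)) ∧
    ((∃ j, 1 ≤ j ∧ j ≤ T ∧ (-1 : ℤ) ^ j * v j = m) →
      ∀ x y : ℕ,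
        (0 < x ∧ 0 < y ∧ Nat.Coprime x y ∧
          (x : ℤ) ^ 2 - (d : ℤ) * (y : ℤ) ^ 2 = m) ↔
        (∃ N k : ℕ, 1 ≤ N ∧ N ≤ T ∧ (-1 : ℤ) ^ N * v N = m ∧
          (x : ℤ) = P (N + k * T + 1) ∧ (y : ℤ) = Q (N + k * T + 1))) :=
  stmt12_general d hd m hmd a a' ha ha'0 ha' u v hu0 hv0 hvpos hu hv P Q hP0 hP1 hQ0 hQ1 hP hQ T hT
    hper hTeven
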